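/- arXiv:math/0603397 — 4 statements merged into one kernel-verified Lean document; each statement's English description precedes it below -/
import Mathlib

section
/- In the free group F on two generators x and y, setting a = [y, x] = y⁻¹x⁻¹yx, the equation y⁻¹ · a · x⁻¹ · y · x = y · a · y⁻¹ · a does not hold in F. -/
/-! Since `x⁻¹ y x = y a`, the relation reads `y⁻¹ a y a = y a y⁻¹ a`, i.e. `y²` commutes with
`a = [y, x]`. This already fails in `S₄`: for `y` a 4-cycle and `x` a transposition, `y²` is a
double transposition and `[y, x]` a 3-cycle. -/

open Equiv

theorem scott_relation_iff_commute {G : Type*} [Group G] {x y a : G}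
    (ha : a = y⁻¹ * x⁻¹ * y * x) :
    y⁻¹ * a * x⁻¹ * y * x = y * a * y⁻¹ * a ↔ Commute (y ^ 2) a := by
  have hl : y⁻¹ * a * x⁻¹ * y * x = y⁻¹ * (a * y ^ 2) * y⁻¹ * a := by subst ha; group
  have hr : y * a * y⁻¹ * a = y⁻¹ * (y ^ 2 * a) * y⁻¹ * a := by group
  rw [hl, hr, mul_left_inj, mul_left_inj, mul_right_inj, Commute, SemiconjBy, eq_comm]

theorem not_commute_sq_finRotate_commutator_swap :
    ¬ Commute (finRotate 4 ^ 2) ((finRotate 4)⁻¹ * (swap 0 1)⁻¹ * finRotate 4 * swap 0 1) := by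
  rw [Commute, SemiconjBy]
  decide

/-- Equation (7) of the paper fails in the free group: with a = [y,x] = y⁻¹x⁻¹yx,
y⁻¹·a·x⁻¹·y·x ≠ y·a·y⁻¹·a. -/
theorem scott_equation7_fails :
    let x : FreeGroup (Fin 2) := FreeGroup.of 0
    let y : FreeGroup (Fin 2) := FreeGroup.of 1
    let a : FreeGroup (Fin 2) := y⁻¹ * x⁻¹ * y * x
    y⁻¹ * a * x⁻¹ * y * x ≠ y * a * y⁻¹ * a := by
  intro x y a
  rw [Ne, scott_relation_iff_commute rfl]
  intro h
  apply not_commute_sq_finRotate_commutator_swap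
  simpa [x, y, a] using h.map (FreeGroup.lift ![swap 0 1, finRotate 4])
end

section
/- Let G be a group and let σ₁, σ₂, x ∈ G satisfy the braid relation σ₁σ₂σ₁ = σ₂σ₁σ₂, the commutation relation σ₂x = xσ₂, and x(σ₁⁻¹xσ₁⁻¹) = (σ₁⁻¹xσ₁⁻¹)x. Then the element y = σ₁⁻¹xσ₁ satisfies y(σ₂⁻¹yσ₂⁻¹) = (σ₂⁻¹yσ₂⁻¹)y. -/
/-!
Conjugation by `g = σ₂σ₁` sends `σ₁` to `σ₂` (braid relation) and `x` to `σ₁⁻¹xσ₁` (as `σ₂`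
commutes with `x`), so relation (16) is the image of the hypothesis under an inner automorphism.
-/

section

variable {G : Type*} [Group G]

theorem Commute.conj_inv_mul_mul_inv {a b : G} (h : Commute a (b⁻¹ * a * b⁻¹)) (g : G) :
    Commute (g⁻¹ * a * g) ((g⁻¹ * b * g)⁻¹ * (g⁻¹ * a * g) * (g⁻¹ * b * g)⁻¹) := by
  simpa [mul_assoc] using h.map (MulAut.conj g⁻¹)

theorem conj_mul_of_braid {σ₁ σ₂ : G} (hb : σ₁ * σ₂ * σ₁ = σ₂ * σ₁ * σ₂) :
    (σ₂ * σ₁)⁻¹ * σ₁ * (σ₂ * σ₁) = σ₂ := by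
  calc (σ₂ * σ₁)⁻¹ * σ₁ * (σ₂ * σ₁) = (σ₂ * σ₁)⁻¹ * (σ₁ * σ₂ * σ₁) := by group
    _ = σ₂ := by rw [hb]; group

theorem conj_mul_of_commute {σ₁ σ₂ x : G} (hc : Commute σ₂ x) :
    (σ₂ * σ₁)⁻¹ * x * (σ₂ * σ₁) = σ₁⁻¹ * x * σ₁ := by
  calc (σ₂ * σ₁)⁻¹ * x * (σ₂ * σ₁) = (σ₂ * σ₁)⁻¹ * (x * σ₂) * σ₁ := by group
    _ = σ₁⁻¹ * x * σ₁ := by rw [← hc.eq]; group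

end

/-- Relation (16) of Lemma 3. -/
theorem lemma3_relation16 {G : Type*} [Group G] (σ₁ σ₂ x : G)
    (hb : σ₁ * σ₂ * σ₁ = σ₂ * σ₁ * σ₂)
    (hc : σ₂ * x = x * σ₂)
    (h : x * (σ₁⁻¹ * x * σ₁⁻¹) = (σ₁⁻¹ * x * σ₁⁻¹) * x) :
    (σ₁⁻¹ * x * σ₁) * (σ₂⁻¹ * (σ₁⁻¹ * x * σ₁) * σ₂⁻¹) =
      (σ₂⁻¹ * (σ₁⁻¹ * x * σ₁) * σ₂⁻¹) * (σ₁⁻¹ * x * σ₁) := by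
  have key := Commute.conj_inv_mul_mul_inv h (σ₂ * σ₁)
  rwa [conj_mul_of_braid hb, conj_mul_of_commute hc] at key
end

section
/- Let G be a group and let σ₁, σ₂, u, v ∈ G satisfy the braid relation σ₁σ₂σ₁ = σ₂σ₁σ₂, the commutation relations σ₂u = uσ₂ and σ₂v = vσ₂, and v(σ₁⁻¹u⁻¹σ₁)v⁻¹(σ₁⁻¹uσ₁) = σ₁². Then the elements u' = σ₁⁻¹uσ₁ and v' = σ₁⁻¹vσ₁ satisfy v'(σ₂⁻¹u'⁻¹σ₂)v'⁻¹(σ₂⁻¹u'σ₂) = σ₂². -/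
/-!
Conjugation by `σ₂σ₁` sends `σ₁` to `σ₂` (braid relation) and, since `u` and `v` commute with
`σ₂`, sends `u` and `v` to `u'` and `v'`. Relation (17) is therefore the image of the hypothesis
under this inner automorphism.
-/

namespace MulAut

variable {G : Type*} [Group G]

theorem conj_inv_mul_apply_of_braid {a b : G} (hb : a * b * a = b * a * b) :
    conj (b * a)⁻¹ a = b := by
  rw [conj_apply, inv_inv, mul_inv_rev, mul_assoc _ a, ← mul_assoc a b a, hb]
  group

theorem conj_inv_mul_apply_of_commute {b x : G} (a : G) (h : Commute b x) :
    conj (b * a)⁻¹ x = a⁻¹ * x * a := by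
  simp only [conj_apply, inv_inv, mul_inv_rev, mul_assoc, h.inv_left.left_comm,
    inv_mul_cancel_left]

end MulAut

/-- Relation (17) of Lemma 3. -/
theorem lemma3_relation17 {G : Type*} [Group G] (σ₁ σ₂ u v : G)
    (hb : σ₁ * σ₂ * σ₁ = σ₂ * σ₁ * σ₂)
    (hcu : σ₂ * u = u * σ₂)
    (hcv : σ₂ * v = v * σ₂)
    (h : v * (σ₁⁻¹ * u⁻¹ * σ₁) * v⁻¹ * (σ₁⁻¹ * u * σ₁) = σ₁ ^ 2) :
    (σ₁⁻¹ * v * σ₁) * (σ₂⁻¹ * (σ₁⁻¹ * u * σ₁)⁻¹ * σ₂) * (σ₁⁻¹ * v * σ₁)⁻¹ *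
      (σ₂⁻¹ * (σ₁⁻¹ * u * σ₁) * σ₂) = σ₂ ^ 2 := by
  set φ := MulAut.conj (σ₂ * σ₁)⁻¹
  have hσ₁ : φ σ₁ = σ₂ := MulAut.conj_inv_mul_apply_of_braid hb
  have hu : φ u = σ₁⁻¹ * u * σ₁ := MulAut.conj_inv_mul_apply_of_commute σ₁ hcu
  have hv : φ v = σ₁⁻¹ * v * σ₁ := MulAut.conj_inv_mul_apply_of_commute σ₁ hcv
  have key := congrArg φ h
  simp only [map_mul, map_inv, map_pow, hσ₁, hu, hv] at key
  exact key
end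

section
/- The group G presented by generators a, b with relations aba = bab and ab²a = 1 (the braid group B₃(S²) of the sphere) has an element of finite order greater than 1; in fact (ab)³ has order dividing 2 and is nontrivial, so G has torsion. -/
/-! The relations give `(ab)³ = (aba)(bab) = b(ab²a)b = b²` and, since `ab²a = 1` forces
`a² = b⁻²`, also `(ab)³ = (aba)(aba) = ab·a²·ba = a²`; hence `((ab)³)² = a²b² = 1`.
The element `(ab)³` is nontrivial because `a, b ↦ 1 ∈ ℤ/4` respects the relations and sends
it to `6 = 2 ≠ 0`. -/

def sphereBraid3Rels : Set (FreeGroup (Fin 2)) :=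
  {FreeGroup.of 0 * FreeGroup.of 1 * FreeGroup.of 0 *
     (FreeGroup.of 1 * FreeGroup.of 0 * FreeGroup.of 1)⁻¹,
   FreeGroup.of 0 * FreeGroup.of 1 ^ 2 * FreeGroup.of 0}

section Relations

variable {G : Type*} [Group G] {a b : G}

theorem sq_mul_sq_eq_one_of_mul_sq_mul_eq_one (h : a * b ^ 2 * a = 1) : a ^ 2 * b ^ 2 = 1 :=
  calc a ^ 2 * b ^ 2 = a * (a * b ^ 2 * a) * a⁻¹ := by rw [sq]; group
    _ = 1 := by rw [h]; group

theorem mul_pow_three_eq_sq_right (hbraid : a * b * a = b * a * b) (h : a * b ^ 2 * a = 1) :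
    (a * b) ^ 3 = b ^ 2 :=
  calc (a * b) ^ 3 = (a * b * a) * (b * a * b) := by rw [pow_three']; group
    _ = b * (a * b ^ 2 * a) * b := by rw [hbraid, sq]; group
    _ = b ^ 2 := by rw [h, sq]; group

theorem mul_pow_three_eq_sq_left (hbraid : a * b * a = b * a * b) (h : a * b ^ 2 * a = 1) :
    (a * b) ^ 3 = a ^ 2 := by
  have ha : a ^ 2 = (b ^ 2)⁻¹ := eq_inv_of_mul_eq_one_left (sq_mul_sq_eq_one_of_mul_sq_mul_eq_one h)
  calc (a * b) ^ 3 = (a * b * a) * (b * a * b) := by rw [pow_three']; group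
    _ = a * b * a ^ 2 * b * a := by rw [← hbraid, sq]; group
    _ = a * b * (b ^ 2)⁻¹ * b * a := by rw [ha]
    _ = a ^ 2 := by rw [sq, sq]; group

theorem mul_pow_three_sq_eq_one (hbraid : a * b * a = b * a * b) (h : a * b ^ 2 * a = 1) :
    ((a * b) ^ 3) ^ 2 = 1 :=
  calc ((a * b) ^ 3) ^ 2 = (a * b) ^ 3 * (a * b) ^ 3 := sq _
    _ = a ^ 2 * b ^ 2 :=
        congrArg₂ (· * ·) (mul_pow_three_eq_sq_left hbraid h) (mul_pow_three_eq_sq_right hbraid h)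
    _ = 1 := sq_mul_sq_eq_one_of_mul_sq_mul_eq_one h

end Relations

section SphereBraid3

open PresentedGroup

theorem sphereBraid3_of_braid :
    (of 0 * of 1 * of 0 : PresentedGroup sphereBraid3Rels) = of 1 * of 0 * of 1 := by
  have h := one_of_mem (rels := sphereBraid3Rels) (Set.mem_insert _ _)
  simp only [map_mul, map_inv, mul_inv_eq_one] at h
  exact h

theorem sphereBraid3_of_mul_sq_mul :
    (of 0 * of 1 ^ 2 * of 0 : PresentedGroup sphereBraid3Rels) = 1 := by
  have h := one_of_mem (rels := sphereBraid3Rels) (Set.mem_insert_of_mem _ rfl)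
  simp only [map_mul, map_pow] at h
  exact h

theorem sphereBraid3Rels_lift_eq_one {H : Type*} [Group H] {x y : H}
    (hbraid : x * y * x = y * x * y) (h : x * y ^ 2 * x = 1) :
    ∀ r ∈ sphereBraid3Rels, FreeGroup.lift ![x, y] r = 1 := by
  rintro r (rfl | rfl)
  · simp [hbraid]
  · simpa using h

end SphereBraid3

/-- In B₃(S²) = ⟨a, b ∣ aba = bab, ab²a = 1⟩, the element (ab)³ is a nontrivial
element of order dividing 2; hence the group has torsion. -/
theorem sphere_braid3_torsion :
    let a : PresentedGroup sphereBraid3Rels := PresentedGroup.of 0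
    let b : PresentedGroup sphereBraid3Rels := PresentedGroup.of 1
    (a * b) ^ 3 ≠ 1 ∧ ((a * b) ^ 3) ^ 2 = 1 := by
  intro a b
  refine ⟨fun h => ?_, mul_pow_three_sq_eq_one sphereBraid3_of_braid sphereBraid3_of_mul_sq_mul⟩
  let x : Multiplicative (ZMod 4) := .ofAdd 1
  have hx : ∀ r ∈ sphereBraid3Rels, FreeGroup.lift ![x, x] r = 1 :=
    sphereBraid3Rels_lift_eq_one rfl (by decide)
  have hx3 := congrArg (PresentedGroup.toGroup hx) h
  simp only [map_pow, map_mul, map_one, a, b, PresentedGroup.toGroup.of] at hx3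
  exact absurd hx3 (by decide)
end
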